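/- arXiv:2108.01399 — 3 statements merged into one kernel-verified Lean document; each statement's English description precedes it below -/
import Mathlib

section
/- For a C_q-quasi-greedy Markushevich basis, the truncation operator is uniformly bounded: ‖T_α(f)‖ ≤ C_q‖f‖ for all α > 0 and all f ∈ X. -/
open Finset

/-- A semi-normalized Markushevich basis of a real Banach space `X`. -/
structure MBasis (X : Type*) [NormedAddCommGroup X] [NormedSpace ℝ X] where
  e : ℕ → X
  coord : ℕ → X →L[ℝ] ℝ
  biorth : ∀ n m, coord n (e m) = if n = m then 1 else 0
  dense_span : (Submodule.span ℝ (Set.range e)).topologicalClosure = ⊤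
  total : ∀ f : X, (∀ n, coord n f = 0) → f = 0
  semiNormalized : ∃ c₁ c₂ : ℝ, 0 < c₁ ∧
    ∀ n, c₁ ≤ ‖e n‖ ∧ c₁ ≤ ‖coord n‖ ∧ ‖e n‖ ≤ c₂ ∧ ‖coord n‖ ≤ c₂

namespace MBasis

variable {X : Type*} [NormedAddCommGroup X] [NormedSpace ℝ X] (B : MBasis X)

/-- The support of a vector. -/
def supp (f : X) : Set ℕ := {n | B.coord n f ≠ 0}

/-- Finitely supported vectors. -/
def FinSupp (f : X) : Prop := (B.supp f).Finite

/-- Coordinate projection onto a finite set. -/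
noncomputable def P (A : Finset ℕ) (f : X) : X := ∑ n ∈ A, B.coord n f • B.e n

/-- Indicator sum `1_A`. -/
noncomputable def ind (A : Finset ℕ) : X := ∑ n ∈ A, B.e n

/-- Partial sum of order `k`. -/
noncomputable def S (k : ℕ) (f : X) : X := B.P (Finset.range k) f

/-- `A` is a greedy set for `f`. -/
def Greedy (f : X) (A : Finset ℕ) : Prop :=
  ∀ n ∈ A, ∀ m ∉ A, |B.coord m f| ≤ |B.coord n f|

/-- Quasi-greedy with constant `C`. -/
def QuasiGreedy (C : ℝ) : Prop :=
  ∀ f : X, ∀ A : Finset ℕ, B.Greedy f A → ‖f - B.P A f‖ ≤ C * ‖f‖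

/-- Democratic with constant `C`. -/
def Democratic (C : ℝ) : Prop :=
  ∀ A B' : Finset ℕ, A.card ≤ B'.card → ‖B.ind A‖ ≤ C * ‖B.ind B'‖

/-- Conservative with constant `C`. -/
def Conservative (C : ℝ) : Prop :=
  ∀ A B' : Finset ℕ, A.card ≤ B'.card → (∀ i ∈ A, ∀ j ∈ B', i < j) →
    ‖B.ind A‖ ≤ C * ‖B.ind B'‖

/-- Symmetric for largest coefficients with constant `C`. -/
def SLC (C : ℝ) : Prop :=
  ∀ (f : X) (A B' : Finset ℕ) (ε η : ℕ → ℝ),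
    A.card ≤ B'.card → Disjoint A B' →
    Disjoint (B.supp f) ((A ∪ B' : Finset ℕ) : Set ℕ) →
    (∀ n, |B.coord n f| ≤ 1) →
    (∀ n ∈ A, |ε n| = 1) → (∀ n ∈ B', |η n| = 1) →
    ‖f + ∑ n ∈ A, ε n • B.e n‖ ≤ C * ‖f + ∑ n ∈ B', η n • B.e n‖

/-- Almost-greedy with constant `C`. -/
def AlmostGreedy (C : ℝ) : Prop :=
  ∀ f : X, ∀ A : Finset ℕ, B.Greedy f A →
    ∀ B' : Finset ℕ, B'.card ≤ A.card → ‖f - B.P A f‖ ≤ C * ‖f - B.P B' f‖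

/-- Partially-greedy with constant `C`. -/
def PartiallyGreedy (C : ℝ) : Prop :=
  ∀ f : X, ∀ A : Finset ℕ, B.Greedy f A →
    ∀ k ≤ A.card, ‖f - B.P A f‖ ≤ C * ‖f - B.S k f‖

/-- Property (F) with constant `C`. -/
def PropF (C : ℝ) : Prop :=
  ∀ (f g : X) (A B' : Finset ℕ),
    B.FinSupp f → B.FinSupp g → Disjoint (B.supp f) (B.supp g) →
    A.card ≤ B'.card → Disjoint A B' →
    Disjoint (B.supp (f + g)) ((A ∪ B' : Finset ℕ) : Set ℕ) →
    (∀ n, |B.coord n f| ≤ 1) →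
    (∀ m n, B.coord n g ≠ 0 → |B.coord m f| ≤ |B.coord n g|) →
    ‖f + B.ind A‖ ≤ C * ‖f + g + B.ind B'‖

/-- Property (F_p) with constant `C` (extra condition `A < supp(g) ∪ B`). -/
def PropFp (C : ℝ) : Prop :=
  ∀ (f g : X) (A B' : Finset ℕ),
    B.FinSupp f → B.FinSupp g → Disjoint (B.supp f) (B.supp g) →
    A.card ≤ B'.card → Disjoint A B' →
    Disjoint (B.supp (f + g)) ((A ∪ B' : Finset ℕ) : Set ℕ) →
    (∀ n, |B.coord n f| ≤ 1) →
    (∀ m n, B.coord n g ≠ 0 → |B.coord m f| ≤ |B.coord n g|) →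
    (∀ i ∈ A, (∀ j ∈ B.supp g, i < j) ∧ (∀ j ∈ B', i < j)) →
    ‖f + B.ind A‖ ≤ C * ‖f + g + B.ind B'‖

/-- The set of coordinates of `y` with coefficient of modulus one. -/
def unitSet (y : X) : Set ℕ := {n | B.coord n y ≠ 0 ∧ |B.coord n y| = 1}

/-- Property (F*) with constant `C`. -/
def PropFStar (C : ℝ) : Prop :=
  ∀ f z y : X,
    B.FinSupp f → B.FinSupp z → B.FinSupp y →
    Disjoint (B.supp f) (B.supp z) → Disjoint (B.supp f) (B.supp y) →
    Disjoint (B.supp z) (B.supp y) →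
    (∀ n, |B.coord n f| ≤ 1) → (∀ n, |B.coord n z| ≤ 1) →
    (B.supp z).ncard ≤ (B.unitSet y).ncard →
    (∀ m n, B.coord n y ≠ 0 → |B.coord m f| ≤ |B.coord n y|) →
    ‖f + z‖ ≤ C * ‖f + y‖

/-- Property (F*_p) with constant `C` (extra condition `supp z < supp (f + y)`). -/
def PropFStarP (C : ℝ) : Prop :=
  ∀ f z y : X,
    B.FinSupp f → B.FinSupp z → B.FinSupp y →
    Disjoint (B.supp f) (B.supp z) → Disjoint (B.supp f) (B.supp y) →
    Disjoint (B.supp z) (B.supp y) →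
    (∀ n, |B.coord n f| ≤ 1) → (∀ n, |B.coord n z| ≤ 1) →
    (B.supp z).ncard ≤ (B.unitSet y).ncard →
    (∀ m n, B.coord n y ≠ 0 → |B.coord m f| ≤ |B.coord n y|) →
    (∀ i ∈ B.supp z, ∀ j ∈ B.supp (f + y), i < j) →
    ‖f + z‖ ≤ C * ‖f + y‖

end MBasis

/-- For a `C_q`-quasi-greedy basis, the truncation operator is uniformly bounded:
`‖T_α(f)‖ ≤ C_q ‖f‖` for all `α > 0` and all `f`. Here `T_α(f)` replaces each coordinate
`e_n*(f)` with `|e_n*(f)| > α` by `α · sign(e_n*(f))` and keeps the others. -/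
theorem truncation_bounded
    {X : Type*} [NormedAddCommGroup X] [NormedSpace ℝ X] [CompleteSpace X]
    (B : MBasis X) (Cq : ℝ) (hq : B.QuasiGreedy Cq)
    (α : ℝ) (hα : 0 < α) (f : X)
    (hfin : {n | α < |B.coord n f|}.Finite) :
    ‖f + ∑ n ∈ hfin.toFinset, (α * Real.sign (B.coord n f) - B.coord n f) • B.e n‖
      ≤ Cq * ‖f‖ := by
  -- Notation: `a n` for the coordinates.
  -- We prove a generalized statement by strong induction on the cardinality of the
  -- exceedance set, varying the truncation level.
  have hempty : ∀ (γ : ℝ) (hγ : 0 < γ) (hfin : {n | γ < |B.coord n f|}.Finite),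
      hfin.toFinset = ∅ →
      ‖f + ∑ n ∈ hfin.toFinset, (γ * Real.sign (B.coord n f) - B.coord n f) • B.e n‖
        ≤ Cq * ‖f‖ := by
    intro γ hγ hfin hA
    rw [hA]
    simp only [Finset.sum_empty, add_zero]
    have hgre : B.Greedy f ∅ := by intro n hn; exact absurd hn (Finset.notMem_empty n)
    have := hq f ∅ hgre
    simpa [MBasis.P] using this
  have key : ∀ N : ℕ, ∀ γ : ℝ, 0 < γ → ∀ hfin : {n | γ < |B.coord n f|}.Finite,
      hfin.toFinset.card ≤ N →
      ‖f + ∑ n ∈ hfin.toFinset, (γ * Real.sign (B.coord n f) - B.coord n f) • B.e n‖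
        ≤ Cq * ‖f‖ := by
    intro N
    induction N with
    | zero =>
      intro γ hγ hfin hcard
      exact hempty γ hγ hfin (Finset.card_eq_zero.mp (Nat.le_zero.mp hcard))
    | succ N ih =>
      intro γ hγ hfin hcard
      rcases Finset.eq_empty_or_nonempty hfin.toFinset with hA | hne
      · exact hempty γ hγ hfin hA
      · set A := hfin.toFinset with hAdef
        have hmemA : ∀ n, n ∈ A ↔ γ < |B.coord n f| := by
          intro n; rw [hAdef, Set.Finite.mem_toFinset]; rfl
        set β : ℝ := A.inf' hne (fun n => |B.coord n f|) with hβdef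
        obtain ⟨n₀, hn₀A, hn₀⟩ := Finset.exists_mem_eq_inf' hne (fun n => |B.coord n f|)
        have hγβ : γ < β := by rw [hβdef, hn₀]; exact (hmemA n₀).mp hn₀A
        have hβ0 : 0 < β := hγ.trans hγβ
        have hβne : β ≠ 0 := ne_of_gt hβ0
        have hfin' : {n | β < |B.coord n f|}.Finite :=
          hfin.subset (fun n hn => hγβ.trans hn)
        set A' := hfin'.toFinset with hA'def
        have hmemA' : ∀ n, n ∈ A' ↔ β < |B.coord n f| := by
          intro n; rw [hA'def, Set.Finite.mem_toFinset]; rfl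
        have hsub : A' ⊆ A := by
          intro n hn
          exact (hmemA n).mpr (hγβ.trans ((hmemA' n).mp hn))
        have hn₀notin : n₀ ∉ A' := by
          intro h
          have := (hmemA' n₀).mp h
          rw [← hn₀] at this
          exact lt_irrefl _ this
        have hss : A' ⊂ A := ⟨hsub, fun h => hn₀notin (h hn₀A)⟩
        have hcard' : A'.card ≤ N :=
          Nat.lt_succ_iff.mp (lt_of_lt_of_le (Finset.card_lt_card hss) hcard)
        -- scalar identity on A \ A'
        have h1 : ∀ n ∈ A \ A',
            γ * Real.sign (B.coord n f) - B.coord n f = (γ / β - 1) * B.coord n f := by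
          intro n hn
          obtain ⟨hnA, hnA'⟩ := Finset.mem_sdiff.mp hn
          have hle : |B.coord n f| ≤ β := not_lt.mp (fun h => hnA' ((hmemA' n).mpr h))
          have hge : β ≤ |B.coord n f| := Finset.inf'_le _ hnA
          have habs : |B.coord n f| = β := le_antisymm hle hge
          rcases (abs_eq hβ0.le).mp habs with h | h
          · rw [h, Real.sign_of_pos hβ0]
            field_simp
          · rw [h]
            rw [Real.sign_of_neg (by linarith)]
            field_simp
            ring
        have e1 : ∑ n ∈ A \ A', (γ * Real.sign (B.coord n f) - B.coord n f) • B.e n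
            = (γ / β - 1) • ∑ n ∈ A \ A', (B.coord n f) • B.e n := by
          rw [Finset.smul_sum]
          exact Finset.sum_congr rfl fun n hn => by rw [h1 n hn, mul_smul]
        have e2 : ∑ n ∈ A', (γ * Real.sign (B.coord n f) - B.coord n f) • B.e n
            = (γ / β - 1) • (∑ n ∈ A', (B.coord n f) • B.e n)
              + (γ / β) • ∑ n ∈ A', (β * Real.sign (B.coord n f) - B.coord n f) • B.e n := by
          rw [Finset.smul_sum, Finset.smul_sum, ← Finset.sum_add_distrib]
          refine Finset.sum_congr rfl fun n hn => ?_
          rw [smul_smul, smul_smul, ← add_smul]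
          congr 1
          field_simp
          ring
        -- the convexity identity
        have hveq : f + ∑ n ∈ A, (γ * Real.sign (B.coord n f) - B.coord n f) • B.e n
            = (1 - γ / β) • (f - B.P A f)
              + (γ / β) • (f + ∑ n ∈ A', (β * Real.sign (B.coord n f) - B.coord n f) • B.e n) := by
          rw [MBasis.P,
            ← Finset.sum_sdiff hsub
              (f := fun n => (γ * Real.sign (B.coord n f) - B.coord n f) • B.e n),
            ← Finset.sum_sdiff hsub (f := fun n => (B.coord n f) • B.e n),
            e1, e2]
          module
        have hg : ‖f - B.P A f‖ ≤ Cq * ‖f‖ := by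
          apply hq f A
          intro n hn m hm
          have h1 : ¬ γ < |B.coord m f| := fun h => hm ((hmemA m).mpr h)
          have h2 : γ < |B.coord n f| := (hmemA n).mp hn
          exact le_of_lt (lt_of_le_of_lt (not_lt.mp h1) h2)
        have hh : ‖f + ∑ n ∈ A', (β * Real.sign (B.coord n f) - B.coord n f) • B.e n‖
            ≤ Cq * ‖f‖ := ih β hβ0 hfin' hcard'
        have hl : 0 ≤ γ / β := div_nonneg hγ.le hβ0.le
        have h1l : 0 ≤ 1 - γ / β := by
          have : γ / β ≤ 1 := (div_le_one hβ0).mpr hγβ.le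
          linarith
        calc ‖f + ∑ n ∈ A, (γ * Real.sign (B.coord n f) - B.coord n f) • B.e n‖
            = ‖(1 - γ / β) • (f - B.P A f)
              + (γ / β) • (f + ∑ n ∈ A', (β * Real.sign (B.coord n f) - B.coord n f) • B.e n)‖ := by
              rw [hveq]
          _ ≤ ‖(1 - γ / β) • (f - B.P A f)‖
              + ‖(γ / β) • (f + ∑ n ∈ A', (β * Real.sign (B.coord n f) - B.coord n f) • B.e n)‖ :=
              norm_add_le _ _
          _ = (1 - γ / β) * ‖f - B.P A f‖
              + (γ / β) * ‖f + ∑ n ∈ A', (β * Real.sign (B.coord n f) - B.coord n f) • B.e n‖ := by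
              rw [norm_smul, norm_smul, Real.norm_of_nonneg h1l, Real.norm_of_nonneg hl]
          _ ≤ (1 - γ / β) * (Cq * ‖f‖) + (γ / β) * (Cq * ‖f‖) :=
              add_le_add (mul_le_mul_of_nonneg_left hg h1l) (mul_le_mul_of_nonneg_left hh hl)
          _ = Cq * ‖f‖ := by ring
  exact key hfin.toFinset.card α hα hfin le_rfl
end

section
/- If A is a greedy set for f ∈ X, then for every ε > 0 there is a finitely supported y ∈ X with ‖f − y‖ ≤ ε such that A is also a greedy set for y. -/
open Finset

section Aux

variable {X : Type*} [NormedAddCommGroup X] [NormedSpace ℝ X] (B : MBasis X)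

lemma MBasis.coord_P (A : Finset ℕ) (x : X) (n : ℕ) :
    B.coord n (B.P A x) = if n ∈ A then B.coord n x else 0 := by
  unfold MBasis.P
  rw [map_sum]
  simp only [map_smul, smul_eq_mul, B.biorth, mul_ite, mul_one, mul_zero]
  exact Finset.sum_ite_eq A n (fun m => B.coord m x)

lemma MBasis.P_sub (A : Finset ℕ) (x y : X) :
    B.P A (x - y) = B.P A x - B.P A y := by
  unfold MBasis.P
  rw [← Finset.sum_sub_distrib]
  congr 1; ext n
  rw [map_sub, sub_smul]

/-- Submodule of finitely supported vectors. -/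
noncomputable def finSuppSubmodule : Submodule ℝ X where
  carrier := {g | B.FinSupp g}
  zero_mem' := by
    have h : B.supp (0 : X) ⊆ ∅ := by intro n hn; simp [MBasis.supp] at hn
    exact Set.Finite.subset Set.finite_empty h
  add_mem' := by
    intro a b ha hb
    refine (ha.union hb).subset ?_
    intro n hn
    simp only [MBasis.supp, Set.mem_setOf_eq, map_add] at hn ⊢
    by_contra h
    simp only [Set.mem_union, Set.mem_setOf_eq, MBasis.supp] at h
    push_neg at h
    exact hn (by rw [h.1, h.2, add_zero])
  smul_mem' := by
    intro c x hx
    refine hx.subset ?_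
    intro n hn
    simp only [MBasis.supp, Set.mem_setOf_eq, map_smul, smul_eq_mul] at hn ⊢
    intro h
    exact hn (by rw [h, mul_zero])

lemma mem_finSuppSubmodule_of_span :
    Submodule.span ℝ (Set.range B.e) ≤ finSuppSubmodule B := by
  rw [Submodule.span_le]
  rintro _ ⟨m, rfl⟩
  show B.FinSupp (B.e m)
  refine (Set.finite_singleton m).subset ?_
  intro n hn
  simp only [MBasis.supp, Set.mem_setOf_eq, B.biorth] at hn
  rw [Set.mem_singleton_iff]
  by_contra h
  rw [if_neg h] at hn
  exact hn rfl

lemma MBasis.finsupp_approx (f : X) {δ : ℝ} (hδ : 0 < δ) :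
    ∃ g : X, B.FinSupp g ∧ ‖f - g‖ ≤ δ := by
  have hf : f ∈ closure ((Submodule.span ℝ (Set.range B.e) : Submodule ℝ X) : Set X) := by
    have := B.dense_span
    have : f ∈ (Submodule.span ℝ (Set.range B.e)).topologicalClosure := by
      rw [this]; trivial
    exact this
  rw [Metric.mem_closure_iff] at hf
  obtain ⟨g, hg, hdist⟩ := hf δ hδ
  exact ⟨g, mem_finSuppSubmodule_of_span B hg, by
    rw [← dist_eq_norm]; exact le_of_lt hdist⟩

end Aux

/-- If `A` is a greedy set for `f`, then for every `ε > 0` there is a finitely supported `y`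
with `‖f − y‖ ≤ ε` such that `A` is also a greedy set for `y`. -/
theorem greedy_set_approx
    {X : Type*} [NormedAddCommGroup X] [NormedSpace ℝ X] [CompleteSpace X]
    (B : MBasis X) (f : X) (A : Finset ℕ) (hA : B.Greedy f A)
    (ε : ℝ) (hε : 0 < ε) :
    ∃ y : X, B.FinSupp y ∧ ‖f - y‖ ≤ ε ∧ B.Greedy y A := by
  obtain ⟨c₁, c₂, hc₁, hbd⟩ := B.semiNormalized
  have hc₂ : 0 < c₂ := lt_of_lt_of_le hc₁ (le_trans (hbd 0).1 (hbd 0).2.2.1)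
  -- coordinate bound
  have hcoord : ∀ (n : ℕ) (x : X), |B.coord n x| ≤ c₂ * ‖x‖ := by
    intro n x
    calc |B.coord n x| = ‖B.coord n x‖ := rfl
      _ ≤ ‖B.coord n‖ * ‖x‖ := (B.coord n).le_opNorm x
      _ ≤ c₂ * ‖x‖ := by
          apply mul_le_mul_of_nonneg_right (hbd n).2.2.2 (norm_nonneg x)
  set K : ℝ := (A.card : ℝ) * (c₂ * c₂) with hK
  have hK0 : 0 ≤ K := by positivity
  have hPle : ∀ x : X, ‖B.P A x‖ ≤ K * ‖x‖ := by
    intro x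
    calc ‖B.P A x‖ ≤ ∑ n ∈ A, ‖B.coord n x • B.e n‖ := norm_sum_le _ _
      _ ≤ ∑ _n ∈ A, (c₂ * ‖x‖) * c₂ := by
          apply Finset.sum_le_sum
          intro n hn
          rw [norm_smul]
          have h1 : ‖B.coord n x‖ ≤ c₂ * ‖x‖ := hcoord n x
          have h2 : ‖B.e n‖ ≤ c₂ := (hbd n).2.2.1
          exact mul_le_mul h1 h2 (norm_nonneg _) (by positivity)
      _ = K * ‖x‖ := by rw [Finset.sum_const, nsmul_eq_mul]; ring
  rcases A.eq_empty_or_nonempty with rfl | hAne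
  · obtain ⟨g, hg, hfg⟩ := B.finsupp_approx f hε
    exact ⟨g, hg, hfg, fun n hn => absurd hn (Finset.notMem_empty n)⟩
  by_cases hzero : ∃ n ∈ A, B.coord n f = 0
  · -- f is itself finitely supported
    obtain ⟨n₀, hn₀, hn₀0⟩ := hzero
    refine ⟨f, ?_, by simp [hε.le], hA⟩
    refine A.finite_toSet.subset ?_
    intro m hm
    by_contra hmA
    have := hA n₀ hn₀ m hmA
    rw [hn₀0, abs_zero] at this
    exact hm (abs_nonpos_iff.mp this)
  push_neg at hzero
  -- α = minimal coefficient on A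
  set α : ℝ := A.inf' hAne (fun n => |B.coord n f|) with hα
  have hα0 : 0 < α := by
    rw [hα, Finset.lt_inf'_iff]
    intro n hn
    exact abs_pos.mpr (hzero n hn)
  have hαle : ∀ n ∈ A, α ≤ |B.coord n f| := fun n hn => Finset.inf'_le _ hn
  set l : ℝ := ε / (2 * (‖B.P A f‖ + 1)) with hl
  have hl0 : 0 < l := by
    apply div_pos hε
    positivity
  set δ : ℝ := min (l * α / c₂) (ε / (2 * (1 + K))) with hδdef
  have hδ0 : 0 < δ := by
    apply lt_min
    · positivity
    · positivity
  obtain ⟨g, hg, hfg⟩ := B.finsupp_approx f hδ0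
  refine ⟨g - B.P A g + (1 + l) • B.P A f, ?_, ?_, ?_⟩
  · -- finitely supported
    refine (hg.union A.finite_toSet).subset ?_
    intro m hm
    simp only [MBasis.supp, Set.mem_setOf_eq] at hm
    by_contra h
    simp only [Set.mem_union, Finset.mem_coe, Set.mem_setOf_eq, MBasis.supp] at h
    push_neg at h
    apply hm
    rw [map_add, map_sub, map_smul, B.coord_P, B.coord_P, if_neg h.2, if_neg h.2,
      h.1, smul_zero]
    ring
  · -- norm estimate
    have hrw : f - (g - B.P A g + (1 + l) • B.P A f)
        = (f - g) - B.P A (f - g) - l • B.P A f := by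
      rw [B.P_sub]
      module
    rw [hrw]
    have h1 : ‖(f - g) - B.P A (f - g) - l • B.P A f‖
        ≤ ‖f - g‖ + ‖B.P A (f - g)‖ + ‖l • B.P A f‖ := by
      calc ‖(f - g) - B.P A (f - g) - l • B.P A f‖
          ≤ ‖(f - g) - B.P A (f - g)‖ + ‖l • B.P A f‖ := norm_sub_le _ _
        _ ≤ ‖f - g‖ + ‖B.P A (f - g)‖ + ‖l • B.P A f‖ := by
            have := norm_sub_le (f - g) (B.P A (f - g))
            linarith
    have h2 : ‖B.P A (f - g)‖ ≤ K * ‖f - g‖ := hPle _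
    have h3 : ‖l • B.P A f‖ = l * ‖B.P A f‖ := by
      rw [norm_smul, Real.norm_eq_abs, abs_of_pos hl0]
    have h4 : l * ‖B.P A f‖ ≤ ε / 2 := by
      rw [hl, div_mul_eq_mul_div, div_le_div_iff₀ (by positivity) (by norm_num)]
      have : ‖B.P A f‖ ≤ ‖B.P A f‖ + 1 := by linarith
      nlinarith [norm_nonneg (B.P A f), hε.le]
    have h5 : ‖f - g‖ + K * ‖f - g‖ ≤ ε / 2 := by
      have hδ2 : δ ≤ ε / (2 * (1 + K)) := min_le_right _ _
      have : ‖f - g‖ ≤ ε / (2 * (1 + K)) := le_trans hfg hδ2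
      have h6 : (1 + K) * ‖f - g‖ ≤ (1 + K) * (ε / (2 * (1 + K))) :=
        mul_le_mul_of_nonneg_left this (by positivity)
      have h7 : (1 + K) * (ε / (2 * (1 + K))) = ε / 2 := by
        field_simp
      nlinarith
    linarith
  · -- greedy
    intro n hn m hm
    have hcn : B.coord n (g - B.P A g + (1 + l) • B.P A f) = (1 + l) * B.coord n f := by
      rw [map_add, map_sub, map_smul, B.coord_P, B.coord_P, if_pos hn, if_pos hn]
      simp only [smul_eq_mul]
      ring
    have hcm : B.coord m (g - B.P A g + (1 + l) • B.P A f) = B.coord m g := by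
      rw [map_add, map_sub, map_smul, B.coord_P, B.coord_P, if_neg hm, if_neg hm,
        smul_zero]
      ring
    rw [hcn, hcm]
    have hstep : |B.coord m g| ≤ |B.coord m f| + c₂ * δ := by
      have : |B.coord m g - B.coord m f| ≤ c₂ * δ := by
        have := hcoord m (g - f)
        rw [map_sub] at this
        refine le_trans this ?_
        rw [norm_sub_rev]
        exact mul_le_mul_of_nonneg_left hfg hc₂.le
      calc |B.coord m g| = |B.coord m f + (B.coord m g - B.coord m f)| := by ring_nf
        _ ≤ |B.coord m f| + |B.coord m g - B.coord m f| := abs_add_le _ _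
        _ ≤ |B.coord m f| + c₂ * δ := by linarith
    have hδ1 : c₂ * δ ≤ l * α := by
      have : δ ≤ l * α / c₂ := min_le_left _ _
      calc c₂ * δ ≤ c₂ * (l * α / c₂) := mul_le_mul_of_nonneg_left this hc₂.le
        _ = l * α := by field_simp
    have hmn : |B.coord m f| ≤ |B.coord n f| := hA n hn m hm
    have : |(1 + l) * B.coord n f| = (1 + l) * |B.coord n f| := by
      rw [abs_mul, abs_of_pos (by linarith)]
    rw [this]
    have hαn : α ≤ |B.coord n f| := hαle n hn
    nlinarith [hl0.le]
end

section
/- Given a finite set D ⊂ ℕ and f ∈ X \ {0} with supp(f) ∩ D = ∅, for every ε > 0 there exists a finitely supported y ∈ X with ‖f − y‖ < ε, supp(y) ∩ D = ∅, and sup_n|e_n*(f)| = sup_n|e_n*(y)|. -/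
open Finset

/-- Given a finite set `D` and `f ≠ 0` with `supp(f) ∩ D = ∅`, for every `ε > 0` there exists a
finitely supported `y` with `‖f − y‖ < ε`, `supp(y) ∩ D = ∅` and
`sup_n |e_n*(f)| = sup_n |e_n*(y)|`. -/
theorem approx_preserving_sup_norm
    {X : Type*} [NormedAddCommGroup X] [NormedSpace ℝ X] [CompleteSpace X]
    (B : MBasis X) (D : Finset ℕ) (f : X) (hf : f ≠ 0)
    (hsupp : ∀ n ∈ D, B.coord n f = 0)
    (ε : ℝ) (hε : 0 < ε) :
    ∃ y : X, B.FinSupp y ∧ ‖f - y‖ < ε ∧ (∀ n ∈ D, B.coord n y = 0) ∧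
      (⨆ n, |B.coord n f|) = ⨆ n, |B.coord n y| := by
  classical
  obtain ⟨c₁, c₂, hc₁, hc⟩ := B.semiNormalized
  have hbd : ∀ (g : X) (n : ℕ), |B.coord n g| ≤ c₂ * ‖g‖ := by
    intro g n
    calc |B.coord n g| = ‖B.coord n g‖ := (Real.norm_eq_abs _).symm
      _ ≤ ‖B.coord n‖ * ‖g‖ := (B.coord n).le_opNorm g
      _ ≤ c₂ * ‖g‖ := mul_le_mul_of_nonneg_right (hc n).2.2.2 (norm_nonneg g)
  have hbdd : ∀ g : X, BddAbove (Set.range fun n => |B.coord n g|) := fun g =>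
    ⟨c₂ * ‖g‖, by rintro x ⟨n, rfl⟩; exact hbd g n⟩
  have hsupLip : ∀ g h : X, (⨆ n, |B.coord n g|) ≤ (⨆ n, |B.coord n h|) + c₂ * ‖g - h‖ := by
    intro g h
    refine ciSup_le fun n => ?_
    have h1 : B.coord n g = B.coord n h + B.coord n (g - h) := by
      rw [map_sub]; ring
    calc |B.coord n g| ≤ |B.coord n h| + |B.coord n (g - h)| := h1 ▸ abs_add_le _ _
      _ ≤ (⨆ n, |B.coord n h|) + c₂ * ‖g - h‖ :=
        add_le_add (le_ciSup (hbdd h) n) (hbd _ n)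
  obtain ⟨n₀, hn₀⟩ : ∃ n, B.coord n f ≠ 0 := by
    by_contra h; push_neg at h; exact hf (B.total f h)
  set M : ℝ := ⨆ n, |B.coord n f| with hM
  have hMpos : 0 < M :=
    lt_of_lt_of_le (abs_pos.mpr hn₀) (le_ciSup (hbdd f) n₀)
  -- finiteness of support of span elements
  have hspanfin : ∀ z ∈ Submodule.span ℝ (Set.range B.e), {n | B.coord n z ≠ 0}.Finite := by
    intro z hz
    induction hz using Submodule.span_induction with
    | mem x hx =>
      obtain ⟨m, rfl⟩ := hx
      refine (Set.finite_singleton m).subset fun n hn => ?_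
      simp only [Set.mem_setOf_eq, B.biorth] at hn
      rw [Set.mem_singleton_iff]
      by_contra h
      simp [h] at hn
    | zero => simp
    | add x y _ _ hx hy =>
      refine (hx.union hy).subset fun n hn => ?_
      simp only [Set.mem_setOf_eq, map_add, Set.mem_union] at hn ⊢
      by_contra h
      push_neg at h
      rw [h.1, h.2] at hn
      exact hn (by ring)
    | smul c x _ hx =>
      refine hx.subset fun n hn => ?_
      simp only [Set.mem_setOf_eq, map_smul, smul_eq_mul] at hn ⊢
      exact fun h => hn (by rw [h, mul_zero])
  -- density
  have hdense : f ∈ closure (Submodule.span ℝ (Set.range B.e) : Set X) := by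
    have h1 : f ∈ (Submodule.span ℝ (Set.range B.e)).topologicalClosure := by
      rw [B.dense_span]; trivial
    exact h1
  obtain ⟨z, hzmem, hzlim⟩ := mem_closure_iff_seq_limit.mp hdense
  -- the D-killing map
  set T : X → X := fun g => g - ∑ n ∈ D, B.coord n g • B.e n with hT
  have hTcont : Continuous T := by
    refine continuous_id.sub (continuous_finset_sum _ fun n _ => ?_)
    exact ((B.coord n).continuous).smul continuous_const
  have hTf : T f = f := by
    simp only [hT]
    rw [Finset.sum_eq_zero fun n hn => by rw [hsupp n hn, zero_smul], sub_zero]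
  have hwcoord : ∀ (g : X) (n : ℕ),
      B.coord n (T g) = if n ∈ D then 0 else B.coord n g := by
    intro g n
    simp only [hT, map_sub, map_sum, map_smul, smul_eq_mul, B.biorth,
      mul_ite, mul_one, mul_zero]
    rw [Finset.sum_ite_eq D n fun m => B.coord m g]
    by_cases h : n ∈ D <;> simp [h]
  set w : ℕ → X := fun k => T (z k) with hw
  have hwlim : Filter.Tendsto w Filter.atTop (nhds f) := by
    have := (hTcont.tendsto f).comp hzlim
    rwa [hTf] at this
  have hwfin : ∀ k, (B.supp (w k)).Finite := by
    intro k
    refine (hspanfin (z k) (hzmem k)).subset fun n hn => ?_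
    simp only [MBasis.supp, Set.mem_setOf_eq, hw, hwcoord] at hn ⊢
    by_cases h : n ∈ D
    · simp [h] at hn
    · simpa [h] using hn
  set M' : ℕ → ℝ := fun k => ⨆ n, |B.coord n (w k)| with hM'
  have hM'lim : Filter.Tendsto M' Filter.atTop (nhds M) := by
    rw [tendsto_iff_dist_tendsto_zero]
    have hnorm : Filter.Tendsto (fun k => c₂ * ‖w k - f‖) Filter.atTop (nhds 0) := by
      have h1 : Filter.Tendsto (fun k => ‖w k - f‖) Filter.atTop (nhds 0) :=
        tendsto_iff_norm_sub_tendsto_zero.mp hwlim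
      simpa using h1.const_mul c₂
    refine squeeze_zero (fun k => dist_nonneg) (fun k => ?_) hnorm
    rw [Real.dist_eq, abs_sub_le_iff]
    have h1 := hsupLip (w k) f
    have h2 := hsupLip f (w k)
    rw [norm_sub_rev] at h2
    simp only [hM, hM']
    constructor <;> linarith
  set y : ℕ → X := fun k => (M / M' k) • w k with hy
  have hylim : Filter.Tendsto y Filter.atTop (nhds f) := by
    have hdiv : Filter.Tendsto (fun k => M / M' k) Filter.atTop (nhds (M / M)) :=
      tendsto_const_nhds.div hM'lim hMpos.ne'
    have := hdiv.smul hwlim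
    rwa [div_self hMpos.ne', one_smul] at this
  have hev1 : ∀ᶠ k in Filter.atTop, 0 < M' k :=
    hM'lim.eventually (eventually_gt_nhds hMpos)
  have hev2 : ∀ᶠ k in Filter.atTop, dist (y k) f < ε :=
    hylim (Metric.ball_mem_nhds f hε)
  obtain ⟨k, hk1, hk2⟩ := (hev1.and hev2).exists
  refine ⟨y k, ?_, ?_, ?_, ?_⟩
  · refine (hwfin k).subset fun n hn => ?_
    simp only [MBasis.supp, Set.mem_setOf_eq, hy, map_smul, smul_eq_mul] at hn ⊢
    exact fun h => hn (by rw [h, mul_zero])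
  · rwa [← dist_eq_norm, dist_comm]
  · intro n hn
    simp only [hy, map_smul, smul_eq_mul, hw, hwcoord, if_pos hn, mul_zero]
  · have hco : ∀ n, |B.coord n (y k)| = (M / M' k) * |B.coord n (w k)| := by
      intro n
      simp only [hy, map_smul, smul_eq_mul, abs_mul,
        abs_of_nonneg (div_nonneg hMpos.le hk1.le)]
    calc M = (M / M' k) * M' k := (div_mul_cancel₀ M hk1.ne').symm
      _ = ⨆ n, (M / M' k) * |B.coord n (w k)| := by
        conv_lhs => rw [hM']
        exact Real.mul_iSup_of_nonneg (div_nonneg hMpos.le hk1.le) _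
      _ = ⨆ n, |B.coord n (y k)| := by simp_rw [hco]
end
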